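/- arXiv:2212.10706 — 7 statements merged into one kernel-verified Lean document; each statement's English description precedes it below -/
import Mathlib

section
/- If there exists a set of k mutually orthogonal frequency rectangles of type FR(m,n;q) (a k-MOFR(m,n;q)), then k(q-1) ≤ (m-1)(n-1), i.e. k ≤ (m-1)(n-1)/(q-1). -/
/-!
For each rectangle `F i` and each of the first `q - 1` symbols `s`, the vector
`q • 1[F i = s] - 1` of `ℚ^(m × n)` has zero row and column sums, and the space of such
matrices has dimension `(m - 1)(n - 1)`. The frequency and orthogonality conditions make
vectors of different rectangles orthogonal for the dot product, while those of one rectangle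
have Gram matrix `mn (q I - J)`, which is nonsingular because fewer than `q` symbols are used.
So these `k (q - 1)` vectors are linearly independent.
-/

/-- An `m × n` frequency rectangle on `q` symbols: each symbol appears exactly
`n/q` times in each row and `m/q` times in each column. -/
def IsFreqRect (m n q : ℕ) (F : Fin m → Fin n → Fin q) : Prop :=
  (∀ i : Fin m, ∀ s : Fin q,
      ((Finset.univ : Finset (Fin n)).filter (fun j => F i j = s)).card * q = n) ∧
  (∀ j : Fin n, ∀ s : Fin q,
      ((Finset.univ : Finset (Fin m)).filter (fun i => F i j = s)).card * q = m)

/-- Two frequency rectangles are orthogonal: upon superimposition each ordered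
pair of symbols appears exactly `m*n/q^2` times. -/
def OrthogonalFR (m n q : ℕ) (F G : Fin m → Fin n → Fin q) : Prop :=
  ∀ a b : Fin q,
    ((Finset.univ : Finset (Fin m × Fin n)).filter
        (fun p => F p.1 p.2 = a ∧ G p.1 p.2 = b)).card * q ^ 2 = m * n

/-- A `k`-MOFR`(m,n;q)`: a family of `k` frequency rectangles, pairwise orthogonal. -/
def IsMOFR (m n q k : ℕ) (F : Fin k → Fin m → Fin n → Fin q) : Prop :=
  (∀ i, IsFreqRect m n q (F i)) ∧
  (∀ i j, i ≠ j → OrthogonalFR m n q (F i) (F j))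

/-- An orthogonal array OA`(N,k,q,t)`. -/
def IsOA (N k q t : ℕ) (A : Fin N → Fin k → Fin q) : Prop :=
  ∀ c : Fin t → Fin k, Function.Injective c →
    ∀ y : Fin t → Fin q,
      ((Finset.univ : Finset (Fin N)).filter (fun r => ∀ s, A r (c s) = y s)).card * q ^ t = N

/-- A family of frequency rectangles is `t`-orthogonal: superimposing any `t` of
them, each ordered `t`-tuple of symbols occurs exactly `m*n/q^t` times. -/
def IsTOrthogonal (m n q t k : ℕ) (F : Fin k → Fin m → Fin n → Fin q) : Prop :=
  ∀ c : Fin t → Fin k, Function.Injective c →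
    ∀ y : Fin t → Fin q,
      ((Finset.univ : Finset (Fin m × Fin n)).filter
          (fun p => ∀ s, F (c s) p.1 p.2 = y s)).card * q ^ t = m * n

/-- A Hadamard matrix of order `n` (entries `±1`, `H Hᵀ = n I`). -/
def IsHadamard (n : ℕ) (H : Matrix (Fin n) (Fin n) ℤ) : Prop :=
  (∀ i j, H i j = 1 ∨ H i j = -1) ∧
  H * H.transpose = (n : ℤ) • (1 : Matrix (Fin n) (Fin n) ℤ)

open Finset Function Module

section Balanced

variable {K α β : Type*} [Field K] [Fintype α] [DecidableEq β]

def IsBalanced (q : ℕ) (f : α → β) : Prop :=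
  ∀ s, #{p | f p = s} * q = Fintype.card α

def IsOrthogonalPair (q : ℕ) (f g : α → β) : Prop :=
  ∀ a b, #{p | f p = a ∧ g p = b} * q ^ 2 = Fintype.card α

variable (K) in
def centeredIndicator (q : ℕ) (f : α → β) (s : β) : α → K :=
  fun p => q * (if f p = s then 1 else 0) - 1

variable {q : ℕ} {f g : α → β}

theorem centeredIndicator_dotProduct (a b : β) :
    centeredIndicator K q f a ⬝ᵥ centeredIndicator K q g b =
      q ^ 2 * #{p | f p = a ∧ g p = b} - q * #{p | f p = a} - q * #{p | g p = b}
        + Fintype.card α := by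
  have hexpand : ∀ A B : K, (q * A - 1) * (q * B - 1) = q ^ 2 * (A * B) - q * A - q * B + 1 :=
    fun A B => by ring
  simp_rw [dotProduct, centeredIndicator, hexpand]
  simp only [ite_zero_mul_ite_zero, Finset.sum_add_distrib, Finset.sum_sub_distrib,
    ← Finset.mul_sum, Finset.sum_boole, Finset.sum_const, Finset.card_univ, nsmul_eq_mul, mul_one]

theorem IsBalanced.cast_mul (hf : IsBalanced q f) (s : β) :
    (#{p | f p = s} : K) * q = Fintype.card α := by
  rw [← Nat.cast_mul, hf s]

theorem IsBalanced.sum_centeredIndicator (hf : IsBalanced q f) (s : β) :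
    ∑ p, centeredIndicator K q f s p = 0 := by
  simp only [centeredIndicator]
  rw [Finset.sum_sub_distrib, ← Finset.mul_sum, Finset.sum_boole, Finset.sum_const, card_univ,
    nsmul_one, sub_eq_zero, mul_comm, hf.cast_mul]

theorem centeredIndicator_dotProduct_eq_zero (hf : IsBalanced q f) (hg : IsBalanced q g)
    (hfg : IsOrthogonalPair q f g) (a b : β) :
    centeredIndicator K q f a ⬝ᵥ centeredIndicator K q g b = 0 := by
  have hab : (#{p | f p = a ∧ g p = b} : K) * q ^ 2 = Fintype.card α := by
    rw [← Nat.cast_pow, ← Nat.cast_mul, hfg a b]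
  rw [centeredIndicator_dotProduct]
  linear_combination hab - hf.cast_mul (K := K) a - hg.cast_mul (K := K) b

theorem centeredIndicator_dotProduct_self (hf : IsBalanced q f) (a b : β) :
    centeredIndicator K q f a ⬝ᵥ centeredIndicator K q f b =
      Fintype.card α * (q * (if a = b then 1 else 0) - 1) := by
  rw [centeredIndicator_dotProduct]
  split_ifs with hab
  · subst hab
    simp only [and_self]
    linear_combination ((q : K) - 2) * hf.cast_mul (K := K) a
  · have hempty : #{p | f p = a ∧ f p = b} = 0 := by
      simp only [card_eq_zero, filter_eq_empty_iff]
      rintro p - ⟨rfl, rfl⟩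
      exact hab rfl
    rw [hempty]
    linear_combination -hf.cast_mul (K := K) a - hf.cast_mul (K := K) b

theorem centeredIndicator_dotProduct_family {ι : Type*} [DecidableEq ι] {F : ι → α → β}
    (hbal : ∀ i, IsBalanced q (F i)) (horth : Pairwise fun i j => IsOrthogonalPair q (F i) (F j))
    (i j : ι) (a b : β) :
    centeredIndicator K q (F i) a ⬝ᵥ centeredIndicator K q (F j) b =
      if i = j then (Fintype.card α : K) * (q * (if a = b then 1 else 0) - 1) else 0 := by
  obtain rfl | hij := eq_or_ne i j
  · rw [if_pos rfl]
    exact centeredIndicator_dotProduct_self (hbal i) a b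
  · rw [if_neg hij]
    exact centeredIndicator_dotProduct_eq_zero (hbal i) (hbal j) (horth hij) a b

theorem linearIndependent_centeredIndicator [CharZero K] [Nonempty α] {ι σ : Type*} [Fintype ι]
    [Fintype σ] {F : ι → α → β} (hbal : ∀ i, IsBalanced q (F i))
    (horth : Pairwise fun i j => IsOrthogonalPair q (F i) (F j)) {e : σ → β} (he : Injective e)
    (hσ : Fintype.card σ < q) :
    LinearIndependent K fun u : ι × σ => centeredIndicator K q (F u.1) (e u.2) := by
  classical
  rw [Fintype.linearIndependent_iff]
  intro g hg ⟨i, s⟩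
  set T := ∑ s', g (i, s') with hT
  have hrow : ∀ s, (Fintype.card α : K) * (q * g (i, s) - T) = 0 := by
    intro s
    have hdot := congrArg (· ⬝ᵥ centeredIndicator K q (F i) (e s)) hg
    simp only [sum_dotProduct, smul_dotProduct, centeredIndicator_dotProduct_family hbal horth,
      he.eq_iff, Fintype.sum_prod_type, smul_eq_mul, mul_ite, mul_zero, Finset.sum_ite_irrel,
      Finset.sum_const_zero, Finset.sum_ite_eq', Finset.mem_univ, if_true, zero_dotProduct] at hdot
    rw [← hdot, hT]
    simp only [mul_sub, mul_ite, mul_one, mul_zero, Finset.sum_sub_distrib, Finset.sum_ite_eq',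
      Finset.mem_univ, if_true, Finset.mul_sum]
    rw [← Finset.mul_sum, ← Finset.sum_mul]
    ring
  have hq : (q : K) ≠ 0 := by exact_mod_cast (Nat.zero_le _).trans_lt hσ |>.ne'
  have hmul : ∀ s, (q : K) * g (i, s) = T := fun s =>
    sub_eq_zero.1 <| (mul_eq_zero.1 (hrow s)).resolve_left (by simp)
  have hT0 : T = 0 := by
    have hsum : (q : K) * T = Fintype.card σ * T := by
      rw [hT, Finset.mul_sum, Finset.sum_congr rfl fun s _ => hmul s, Finset.sum_const,
        Finset.card_univ, nsmul_eq_mul]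
    have hne : (q : K) - Fintype.card σ ≠ 0 := sub_ne_zero.2 (by exact_mod_cast hσ.ne')
    have hfactor : ((q : K) - Fintype.card σ) * T = 0 := by linear_combination hsum
    exact (mul_eq_zero.1 hfactor).resolve_left hne
  simpa [hT0, hq] using hmul s

end Balanced

section ZeroMarginals

variable (K : Type*) [Field K]

def zeroMarginals (m n : ℕ) : Submodule K (Fin m × Fin n → K) where
  carrier := {x | (∀ i, ∑ j, x (i, j) = 0) ∧ ∀ j, ∑ i, x (i, j) = 0}
  add_mem' hx hy := ⟨fun i => by simp [Finset.sum_add_distrib, hx.1 i, hy.1 i],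
    fun j => by simp [Finset.sum_add_distrib, hx.2 j, hy.2 j]⟩
  zero_mem' := by simp
  smul_mem' c x hx := ⟨fun i => by simp [← Finset.mul_sum, hx.1 i],
    fun j => by simp [← Finset.mul_sum, hx.2 j]⟩

variable {K}

theorem eq_zero_of_mem_zeroMarginals {M N : ℕ} {x : Fin (M + 1) × Fin (N + 1) → K}
    (hx : x ∈ zeroMarginals K (M + 1) (N + 1))
    (hblock : ∀ (i : Fin M) (j : Fin N), x (i.castSucc, j.castSucc) = 0) : x = 0 := by
  have hlastCol : ∀ i : Fin M, x (i.castSucc, Fin.last N) = 0 := fun i => by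
    simpa [Fin.sum_univ_castSucc, hblock] using hx.1 i.castSucc
  have hupper : ∀ (i : Fin M) j, x (i.castSucc, j) = 0 := fun i j =>
    Fin.lastCases (hlastCol i) (hblock i) j
  have hlastRow : ∀ j, x (Fin.last M, j) = 0 := fun j => by
    simpa [Fin.sum_univ_castSucc, hupper] using hx.2 j
  ext ⟨i, j⟩
  exact Fin.lastCases (hlastRow j) (fun i => hupper i j) i

theorem finrank_zeroMarginals_le (M N : ℕ) :
    finrank K (zeroMarginals K (M + 1) (N + 1)) ≤ M * N := by
  let restrict : zeroMarginals K (M + 1) (N + 1) →ₗ[K] (Fin M × Fin N → K) :=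
    (LinearMap.funLeft K K (Prod.map Fin.castSucc Fin.castSucc)).comp (Submodule.subtype _)
  have hinj : Injective restrict := by
    rw [← LinearMap.ker_eq_bot, LinearMap.ker_eq_bot']
    intro x hx
    exact Subtype.ext <| eq_zero_of_mem_zeroMarginals x.2 fun i j => congrFun hx (i, j)
  simpa using LinearMap.finrank_le_finrank_of_injective hinj

end ZeroMarginals

section FrequencyRectangle

variable {m n q : ℕ} {F : Fin m → Fin n → Fin q}

theorem IsFreqRect.isBalanced (hF : IsFreqRect m n q F) : IsBalanced q (uncurry F) := by
  intro s
  have hrows : #{p : Fin m × Fin n | F p.1 p.2 = s} = ∑ i, #{j | F i j = s} := by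
    simp only [card_filter, Fintype.sum_prod_type]
  show #{p : Fin m × Fin n | F p.1 p.2 = s} * q = Fintype.card (Fin m × Fin n)
  simp [hrows, Finset.sum_mul, hF.1 _ s]

theorem OrthogonalFR.isOrthogonalPair {G : Fin m → Fin n → Fin q} (h : OrthogonalFR m n q F G) :
    IsOrthogonalPair q (uncurry F) (uncurry G) := by
  intro a b
  rw [Fintype.card_prod, Fintype.card_fin, Fintype.card_fin]
  exact h a b

theorem IsFreqRect.centeredIndicator_mem_zeroMarginals {K : Type*} [Field K]
    (hF : IsFreqRect m n q F) (s : Fin q) :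
    centeredIndicator K q (uncurry F) s ∈ zeroMarginals K m n :=
  ⟨fun i => IsBalanced.sum_centeredIndicator (f := F i) (fun s => by simpa using hF.1 i s) s,
    fun j => IsBalanced.sum_centeredIndicator (f := (F · j)) (fun s => by simpa using hF.2 j s) s⟩

end FrequencyRectangle

theorem mofr_upper_bound_general (m n q k : ℕ) (hm : 0 < m) (hn : 0 < n)
    (h : ∃ F : Fin k → Fin m → Fin n → Fin q, IsMOFR m n q k F) :
    k * (q - 1) ≤ (m - 1) * (n - 1) := by
  obtain ⟨F, hrect, horth⟩ := h
  obtain ⟨M, rfl⟩ := Nat.exists_eq_add_one_of_ne_zero hm.ne'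
  obtain ⟨N, rfl⟩ := Nat.exists_eq_add_one_of_ne_zero hn.ne'
  rcases q with _ | Q
  · simp
  let v : Fin k × Fin Q → (Fin (M + 1) × Fin (N + 1) → ℚ) :=
    fun u => centeredIndicator ℚ (Q + 1) (uncurry (F u.1)) u.2.castSucc
  have hindep : LinearIndependent ℚ v :=
    linearIndependent_centeredIndicator (fun i => (hrect i).isBalanced)
      (fun i j hij => (horth i j hij).isOrthogonalPair)
      (Fin.castSucc_injective Q) (by simp)
  have hspan : Submodule.span ℚ (Set.range v) ≤ zeroMarginals ℚ (M + 1) (N + 1) :=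
    Submodule.span_le.2 <| Set.range_subset_iff.2 fun u =>
      (hrect u.1).centeredIndicator_mem_zeroMarginals _
  have hcard := (finrank_span_eq_card hindep).symm.trans_le
    ((Submodule.finrank_mono hspan).trans (finrank_zeroMarginals_le M N))
  simpa using hcard

/-- If a k-MOFR(m,n;q) exists, then k ≤ (m-1)(n-1)/(q-1). -/
theorem mofr_upper_bound (m n q k : ℕ) (hq : 2 ≤ q) (hm : 0 < m) (hn : 0 < n)
    (h : ∃ F : Fin k → Fin m → Fin n → Fin q, IsMOFR m n q k F) :
    k * (q - 1) ≤ (m - 1) * (n - 1) :=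
  mofr_upper_bound_general m n q k hm hn h
end

section
/- Suppose there exists an orthogonal array OA(mn, k, 2, 2). Then there exists a set of k mutually orthogonal frequency rectangles of type FR(2m, 2n; 2), i.e., a k-MOFR(2m,2n;2). -/
/-!
Each column of the orthogonal array, read as an `m × n` array, is inflated by replacing every
entry `x` with the `q × q` block `(ε, δ) ↦ x + ε + δ` over the group `Fin q` (for `q = 2`, the
block `[[x, x+1], [x+1, x]]`). Rows and columns of a block are permutations of the symbols, so
the result is a frequency rectangle. Superimposing the inflations of two columns `x` and `y`, a
cell of the block over `(x, y)` carries `(x + e, y + e)` with `e = ε + δ`, so the pair `(a, b)`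
occurs `q` times in that block if `y - x = b - a` and never otherwise; strength `2` makes `y - x`
take every value in exactly `mn / q` cells.
-/

open Finset

section Inflate

variable {G ι κ : Type*} [AddCommGroup G] [Fintype G] [DecidableEq G]

lemma card_filter_add_eq [Fintype κ] (f : κ → G) (s : G) :
    #{p : G × κ | f p.2 + p.1 = s} = Fintype.card κ := by
  rw [card_filter, Fintype.sum_prod_type_right]
  simp [← eq_sub_iff_add_eq']

lemma card_filter_add_add_eq_and (x y a b : G) :
    #{e : G × G | x + e.1 + e.2 = a ∧ y + e.1 + e.2 = b} =
      if y - x = b - a then Fintype.card G else 0 := by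
  split_ifs with h
  · rw [← card_filter_add_eq (x + ·) a]
    refine congrArg card (filter_congr fun e _ => ?_)
    rw [add_right_comm x e.2, and_iff_left_iff_imp]
    intro hx
    calc y + e.1 + e.2 = (y - x) + (x + e.1 + e.2) := by abel
      _ = b := by rw [h, hx, sub_add_cancel]
  · rw [card_eq_zero, filter_eq_empty_iff]
    rintro e - ⟨hx, hy⟩
    exact h (by rw [← hx, ← hy]; abel)

/-- Every entry `x` of `M` becomes a block: the Cayley table of `G` translated by `x`. -/
def inflate (M : ι → κ → G) : G × ι → G × κ → G :=
  fun p q => M p.2 q.2 + p.1 + q.1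

lemma card_filter_inflate_row [Fintype κ] (M : ι → κ → G) (p : G × ι) (s : G) :
    #{q : G × κ | inflate M p q = s} = Fintype.card κ :=
  card_filter_add_eq (fun j => M p.2 j + p.1) s

lemma card_filter_inflate_col [Fintype ι] (M : ι → κ → G) (q : G × κ) (s : G) :
    #{p : G × ι | inflate M p q = s} = Fintype.card ι := by
  simp only [inflate, add_right_comm _ _ q.1]
  exact card_filter_add_eq (fun i => M i q.2 + q.1) s

lemma card_filter_inflate_and [Fintype ι] [Fintype κ] (M M' : ι → κ → G) (a b : G) :
    #{pq : (G × ι) × (G × κ) | inflate M pq.1 pq.2 = a ∧ inflate M' pq.1 pq.2 = b} =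
      Fintype.card G * #{c : ι × κ | M' c.1 c.2 - M c.1 c.2 = b - a} := by
  calc _ = #{ec : (G × G) × (ι × κ) | M ec.2.1 ec.2.2 + ec.1.1 + ec.1.2 = a ∧
          M' ec.2.1 ec.2.2 + ec.1.1 + ec.1.2 = b} :=
        card_equiv (Equiv.prodProdProdComm G ι G κ) fun _ => by
          simp only [mem_filter, mem_univ, true_and]; rfl
    _ = ∑ c : ι × κ, #{e : G × G | M c.1 c.2 + e.1 + e.2 = a ∧ M' c.1 c.2 + e.1 + e.2 = b} := by
        simp only [card_filter, Fintype.sum_prod_type_right]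
    _ = Fintype.card G * #{c : ι × κ | M' c.1 c.2 - M c.1 c.2 = b - a} := by
        simp only [card_filter_add_add_eq_and, ← sum_filter, sum_const, smul_eq_mul, mul_comm]

end Inflate

namespace IsOA

variable {N k q : ℕ} {A : Fin N → Fin k → Fin q}

lemma card_filter_and (hA : IsOA N k q 2 A) {c c' : Fin k} (hcc' : c ≠ c') (u v : Fin q) :
    #{r | A r c = u ∧ A r c' = v} * q ^ 2 = N := by
  simpa [Fin.forall_fin_two] using hA ![c, c'] (injective_pair_iff_ne.mpr hcc') ![u, v]

lemma card_filter_sub_eq [NeZero q] (hA : IsOA N k q 2 A) {c c' : Fin k} (hcc' : c ≠ c')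
    (d : Fin q) : #{r | A r c' - A r c = d} * q = N := by
  have hfiber : #{r | A r c' - A r c = d} = ∑ u, #{r | A r c = u ∧ A r c' = u + d} := by
    rw [card_eq_sum_card_fiberwise (f := (A · c)) (t := univ) (fun _ _ => mem_univ _)]
    refine sum_congr rfl fun u _ => ?_
    rw [filter_filter]
    refine congrArg card (filter_congr fun r _ => ?_)
    rw [sub_eq_iff_eq_add']
    constructor
    · rintro ⟨h, rfl⟩; exact ⟨rfl, h⟩
    · rintro ⟨rfl, h⟩; exact ⟨h, rfl⟩
  apply Nat.eq_of_mul_eq_mul_right (NeZero.pos q)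
  calc #{r | A r c' - A r c = d} * q * q
      = ∑ u, #{r | A r c = u ∧ A r c' = u + d} * q ^ 2 := by rw [hfiber, mul_assoc, ← sq, sum_mul]
    _ = ∑ _u : Fin q, N := sum_congr rfl fun u _ => hA.card_filter_and hcc' u (u + d)
    _ = N * q := by simp [mul_comm]

end IsOA

section FinIndexed

variable {m n q : ℕ} [NeZero q]

def inflateFin (M : Fin m → Fin n → Fin q) : Fin (q * m) → Fin (q * n) → Fin q :=
  fun I J => inflate M (finProdFinEquiv.symm I) (finProdFinEquiv.symm J)

lemma isFreqRect_inflateFin (M : Fin m → Fin n → Fin q) :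
    IsFreqRect (q * m) (q * n) q (inflateFin M) := by
  refine ⟨fun I s => ?_, fun J s => ?_⟩
  · rw [card_equiv finProdFinEquiv.symm (t := {J | inflate M (finProdFinEquiv.symm I) J = s})
      (fun _ => by simp [inflateFin]), card_filter_inflate_row, Fintype.card_fin, mul_comm]
  · rw [card_equiv finProdFinEquiv.symm (t := {I | inflate M I (finProdFinEquiv.symm J) = s})
      (fun _ => by simp [inflateFin]), card_filter_inflate_col, Fintype.card_fin, mul_comm]

lemma orthogonalFR_inflateFin {M M' : Fin m → Fin n → Fin q}
    (hMM' : ∀ d, #{c : Fin m × Fin n | M' c.1 c.2 - M c.1 c.2 = d} * q = m * n) :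
    OrthogonalFR (q * m) (q * n) q (inflateFin M) (inflateFin M') := by
  intro a b
  rw [card_equiv (finProdFinEquiv.symm.prodCongr finProdFinEquiv.symm)
      (t := {pq | inflate M pq.1 pq.2 = a ∧ inflate M' pq.1 pq.2 = b})
      (fun _ => by simp [inflateFin]), card_filter_inflate_and, Fintype.card_fin]
  calc q * #{c : Fin m × Fin n | M' c.1 c.2 - M c.1 c.2 = b - a} * q ^ 2
      = q * q * (#{c : Fin m × Fin n | M' c.1 c.2 - M c.1 c.2 = b - a} * q) := by ring
    _ = q * m * (q * n) := by rw [hMM']; ring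

end FinIndexed

lemma IsOA.isMOFR_inflateFin {m n k q : ℕ} [NeZero q] {A : Fin (m * n) → Fin k → Fin q}
    (hA : IsOA (m * n) k q 2 A) :
    IsMOFR (q * m) (q * n) q k fun c => inflateFin fun i j => A (finProdFinEquiv (i, j)) c := by
  refine ⟨fun c => isFreqRect_inflateFin _, fun c c' hcc' => orthogonalFR_inflateFin fun d => ?_⟩
  rw [card_equiv finProdFinEquiv (t := {r | A r c' - A r c = d}) (fun _ => by simp)]
  exact hA.card_filter_sub_eq hcc' d

/-- An OA(mn,k,2,2) yields a k-MOFR(2m,2n;2). -/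
theorem oa_to_mofr (m n k : ℕ)
    (h : ∃ A : Fin (m * n) → Fin k → Fin 2, IsOA (m * n) k 2 2 A) :
    ∃ F : Fin k → Fin (2 * m) → Fin (2 * n) → Fin 2,
      IsMOFR (2 * m) (2 * n) 2 k F := by
  obtain ⟨A, hA⟩ := h
  exact ⟨_, hA.isMOFR_inflateFin⟩
end

section
/- Suppose there exists a Hadamard matrix of order mn, where 4 divides mn. Then there exists a set of (mn−1) mutually orthogonal frequency rectangles of type FR(2m, 2n; 2), i.e., an (mn−1)-MOFR(2m,2n;2). -/
namespace MOFRAux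

lemma card_filter_congr {α : Type*} [Fintype α] (p q : α → Prop) [DecidablePred p]
    [DecidablePred q] (h : ∀ a, p a ↔ q a) :
    (Finset.univ.filter p).card = (Finset.univ.filter q).card := by
  congr 1
  exact Finset.filter_congr fun a _ => h a

lemma card_filter_equiv {α β : Type*} [Fintype α] [Fintype β] (e : α ≃ β)
    (p : β → Prop) [DecidablePred p] :
    (Finset.univ.filter fun a => p (e a)).card = (Finset.univ.filter p).card := by
  rw [← Fintype.card_subtype, ← Fintype.card_subtype]
  exact Fintype.card_congr (e.subtypeEquiv fun a => Iff.rfl)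

lemma card_graph {α β : Type*} [Fintype α] [Fintype β] [DecidableEq β] (f : α → β) :
    (Finset.univ.filter fun p : β × α => p.1 = f p.2).card = Fintype.card α := by
  rw [← Fintype.card_subtype]
  exact Fintype.card_congr
    { toFun := fun s => s.1.2
      invFun := fun a => ⟨(f a, a), rfl⟩
      left_inv := fun s => by
        obtain ⟨⟨b, a⟩, hb⟩ := s
        exact Subtype.ext (by simp only at hb ⊢; simp [← hb])
      right_inv := fun a => rfl }

lemma card_pair {γ : Type*} [Fintype γ] (f : Fin 2 → γ → Fin 2) (Q : γ → Prop)
    [DecidablePred Q] :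
    (Finset.univ.filter fun p : (Fin 2 × Fin 2) × γ => p.1.2 = f p.1.1 p.2 ∧ Q p.2).card
      = 2 * (Finset.univ.filter Q).card := by
  rw [← Fintype.card_subtype]
  have e : {p : (Fin 2 × Fin 2) × γ // p.1.2 = f p.1.1 p.2 ∧ Q p.2} ≃ Fin 2 × {c // Q c} :=
    { toFun := fun s => (s.1.1.1, ⟨s.1.2, s.2.2⟩)
      invFun := fun t => ⟨((t.1, f t.1 t.2.1), t.2.1), rfl, t.2.2⟩
      left_inv := fun s => by
        obtain ⟨⟨⟨a, b⟩, c⟩, hb, hQ⟩ := s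
        exact Subtype.ext (by simp only at hb ⊢; simp [hb])
      right_inv := fun t => rfl }
  rw [Fintype.card_congr e, Fintype.card_prod, Fintype.card_fin, Fintype.card_subtype]

lemma had_rows {N : ℕ} {H : Matrix (Fin N) (Fin N) ℤ} (hH : IsHadamard N H)
    {r s : Fin N} (hrs : r ≠ s) :
    (Finset.univ.filter fun c => H r c = H s c).card * 2 = N := by
  have h0 : (H * H.transpose) r s = 0 := by
    rw [hH.2]
    simp [Matrix.smul_apply, Matrix.one_apply, hrs]
  rw [Matrix.mul_apply] at h0
  simp only [Matrix.transpose_apply] at h0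
  set A := Finset.univ.filter fun c => H r c = H s c with hA
  set B := Finset.univ.filter fun c => ¬ H r c = H s c with hB
  have hsplit : (∑ c ∈ A, H r c * H s c) + (∑ c ∈ B, H r c * H s c) = 0 := by
    rw [hA, hB, Finset.sum_filter_add_sum_filter_not]
    exact h0
  have hAsum : (∑ c ∈ A, H r c * H s c) = (A.card : ℤ) := by
    rw [Finset.sum_congr rfl (fun c hc => ?_), Finset.sum_const, nsmul_eq_mul, mul_one]
    have heq : H r c = H s c := (Finset.mem_filter.mp hc).2
    rcases hH.1 r c with h1 | h1 <;> rw [h1] at heq ⊢ <;> rw [← heq] <;> ring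
  have hBsum : (∑ c ∈ B, H r c * H s c) = -(B.card : ℤ) := by
    rw [Finset.sum_congr rfl (fun c hc => ?_), Finset.sum_const, nsmul_eq_mul, mul_neg_one]
    have hne : ¬ H r c = H s c := (Finset.mem_filter.mp hc).2
    rcases hH.1 r c with h1 | h1 <;> rcases hH.1 s c with h2 | h2 <;>
      rw [h1, h2] at hne ⊢ <;> first | (exfalso; exact hne rfl) | ring
  have hcards : A.card + B.card = N := by
    rw [hA, hB, Finset.card_filter_add_card_filter_not, Finset.card_univ,
      Fintype.card_fin]
  have h1 : (A.card : ℤ) = (B.card : ℤ) := by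
    rw [hAsum, hBsum] at hsplit; linarith
  have : A.card = B.card := by exact_mod_cast h1
  omega

lemma had_rows_ne {N : ℕ} {H : Matrix (Fin N) (Fin N) ℤ} (hH : IsHadamard N H)
    {r s : Fin N} (hrs : r ≠ s) :
    (Finset.univ.filter fun c => ¬ H r c = H s c).card * 2 = N := by
  have h1 := had_rows hH hrs
  have h2 : (Finset.univ.filter fun c => H r c = H s c).card
      + (Finset.univ.filter fun c => ¬ H r c = H s c).card = N := by
    rw [Finset.card_filter_add_card_filter_not, Finset.card_univ, Fintype.card_fin]
  omega

lemma fin2_row (a b u s : Fin 2) : (a + b + u = s) ↔ (b = s - a - u) := by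
  revert a b u s; decide

lemma fin2_col (a b u s : Fin 2) : (a + b + u = s) ↔ (a = s - b - u) := by
  revert a b u s; decide

lemma fin2_pair (a b u v x y : Fin 2) :
    (a + b + u = x ∧ a + b + v = y) ↔ (b = x - a - u ∧ v - u = y - x) := by
  revert a b u v x y; decide

lemma fin2_sub_zero (u v : Fin 2) : u - v = 0 ↔ u = v := by revert u v; decide

lemma fin2_sub_one (u v : Fin 2) : u - v = 1 ↔ ¬ u = v := by revert u v; decide

lemma fin2_cases (d : Fin 2) : d = 0 ∨ d = 1 := by revert d; decide

lemma g_eq_iff {u v : ℤ} (hu : u = 1 ∨ u = -1) (hv : v = 1 ∨ v = -1) :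
    ((if u = 1 then (0 : Fin 2) else 1) = if v = 1 then 0 else 1) ↔ u = v := by
  rcases hu with rfl | rfl <;> rcases hv with rfl | rfl <;> simp

/-- The `±1 → Fin 2` coding of the Hadamard matrix entries, with columns indexed
by pairs. -/
def gg {m n : ℕ} (H : Matrix (Fin (m * n)) (Fin (m * n)) ℤ) (r : Fin (m * n))
    (ij : Fin m × Fin n) : Fin 2 :=
  if H r (finProdFinEquiv ij) = 1 then 0 else 1

/-- The frequency rectangle family built from a Hadamard matrix. -/
def famF (m n : ℕ) (H : Matrix (Fin (m * n)) (Fin (m * n)) ℤ)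
    (k : Fin (m * n - 1)) (p : Fin (2 * m)) (q : Fin (2 * n)) : Fin 2 :=
  (finProdFinEquiv.symm p : Fin 2 × Fin m).1 + (finProdFinEquiv.symm q : Fin 2 × Fin n).1 +
    gg H (Fin.castLE (Nat.sub_le _ _) k)
      ((finProdFinEquiv.symm p : Fin 2 × Fin m).2, (finProdFinEquiv.symm q : Fin 2 × Fin n).2)

end MOFRAux

open MOFRAux in
/-- A Hadamard matrix of order mn (with 4 ∣ mn) yields an (mn-1)-MOFR(2m,2n;2). -/
theorem hadamard_to_mofr (m n : ℕ) (h4 : 4 ∣ m * n)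
    (h : ∃ H : Matrix (Fin (m * n)) (Fin (m * n)) ℤ, IsHadamard (m * n) H) :
    ∃ F : Fin (m * n - 1) → Fin (2 * m) → Fin (2 * n) → Fin 2,
      IsMOFR (2 * m) (2 * n) 2 (m * n - 1) F := by
  classical
  obtain ⟨H, hH⟩ := h
  refine ⟨famF m n H, ?_, ?_⟩
  · -- each member is a frequency rectangle
    intro k
    set r : Fin (m * n) := Fin.castLE (Nat.sub_le _ _) k with hr
    constructor
    · intro i s
      have h1 : ((Finset.univ : Finset (Fin (2 * n))).filter
            (fun j => famF m n H k i j = s)).card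
          = ((Finset.univ : Finset (Fin 2 × Fin n)).filter
            (fun bj => famF m n H k i (finProdFinEquiv bj) = s)).card :=
        (card_filter_equiv finProdFinEquiv _).symm
      have h2 : ((Finset.univ : Finset (Fin 2 × Fin n)).filter
            (fun bj => famF m n H k i (finProdFinEquiv bj) = s)).card
          = ((Finset.univ : Finset (Fin 2 × Fin n)).filter
            (fun bj => bj.1 = (fun j => s - (finProdFinEquiv.symm i : Fin 2 × Fin m).1 -
              gg H r ((finProdFinEquiv.symm i : Fin 2 × Fin m).2, j)) bj.2)).card := by
        refine card_filter_congr _ _ fun bj => ?_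
        obtain ⟨b, j⟩ := bj
        simp only [famF, Equiv.symm_apply_apply, ← hr]
        exact fin2_row _ _ _ _
      have h3 : ((Finset.univ : Finset (Fin 2 × Fin n)).filter
            (fun bj => bj.1 = (fun j => s - (finProdFinEquiv.symm i : Fin 2 × Fin m).1 -
              gg H r ((finProdFinEquiv.symm i : Fin 2 × Fin m).2, j)) bj.2)).card = n :=
        (card_graph (fun j => s - (finProdFinEquiv.symm i : Fin 2 × Fin m).1 -
          gg H r ((finProdFinEquiv.symm i : Fin 2 × Fin m).2, j))).trans (Fintype.card_fin n)
      rw [h1, h2, h3]; ring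
    · intro j s
      have h1 : ((Finset.univ : Finset (Fin (2 * m))).filter
            (fun i => famF m n H k i j = s)).card
          = ((Finset.univ : Finset (Fin 2 × Fin m)).filter
            (fun ai => famF m n H k (finProdFinEquiv ai) j = s)).card :=
        (card_filter_equiv finProdFinEquiv _).symm
      have h2 : ((Finset.univ : Finset (Fin 2 × Fin m)).filter
            (fun ai => famF m n H k (finProdFinEquiv ai) j = s)).card
          = ((Finset.univ : Finset (Fin 2 × Fin m)).filter
            (fun ai => ai.1 = (fun i => s - (finProdFinEquiv.symm j : Fin 2 × Fin n).1 -
              gg H r (i, (finProdFinEquiv.symm j : Fin 2 × Fin n).2)) ai.2)).card := by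
        refine card_filter_congr _ _ fun ai => ?_
        obtain ⟨a, i⟩ := ai
        simp only [famF, Equiv.symm_apply_apply, ← hr]
        exact fin2_col _ _ _ _
      have h3 : ((Finset.univ : Finset (Fin 2 × Fin m)).filter
            (fun ai => ai.1 = (fun i => s - (finProdFinEquiv.symm j : Fin 2 × Fin n).1 -
              gg H r (i, (finProdFinEquiv.symm j : Fin 2 × Fin n).2)) ai.2)).card = m :=
        (card_graph (fun i => s - (finProdFinEquiv.symm j : Fin 2 × Fin n).1 -
          gg H r (i, (finProdFinEquiv.symm j : Fin 2 × Fin n).2))).trans (Fintype.card_fin m)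
      rw [h1, h2, h3]; ring
  · -- pairwise orthogonality
    intro k l hkl x y
    set r : Fin (m * n) := Fin.castLE (Nat.sub_le _ _) k with hr
    set s : Fin (m * n) := Fin.castLE (Nat.sub_le _ _) l with hs
    have hrs : r ≠ s := fun hc => hkl (Fin.castLE_injective _ hc)
    set E : (Fin 2 × Fin 2) × (Fin m × Fin n) ≃ Fin (2 * m) × Fin (2 * n) :=
      (Equiv.prodProdProdComm (Fin 2) (Fin 2) (Fin m) (Fin n)).trans
        (Equiv.prodCongr finProdFinEquiv finProdFinEquiv) with hE
    have h1 : ((Finset.univ : Finset (Fin (2 * m) × Fin (2 * n))).filter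
          (fun p => famF m n H k p.1 p.2 = x ∧ famF m n H l p.1 p.2 = y)).card
        = ((Finset.univ : Finset ((Fin 2 × Fin 2) × (Fin m × Fin n))).filter
          (fun t => famF m n H k (E t).1 (E t).2 = x ∧ famF m n H l (E t).1 (E t).2 = y)).card :=
      (card_filter_equiv E _).symm
    have h2 : ((Finset.univ : Finset ((Fin 2 × Fin 2) × (Fin m × Fin n))).filter
          (fun t => famF m n H k (E t).1 (E t).2 = x ∧ famF m n H l (E t).1 (E t).2 = y)).card
        = ((Finset.univ : Finset ((Fin 2 × Fin 2) × (Fin m × Fin n))).filter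
          (fun t => t.1.2 = (fun a ij => x - a - gg H r ij) t.1.1 t.2 ∧
            (fun ij => gg H s ij - gg H r ij = y - x) t.2)).card := by
      refine card_filter_congr _ _ fun t => ?_
      obtain ⟨⟨a, b⟩, i, j⟩ := t
      simp only [hE, Equiv.trans_apply, Equiv.prodProdProdComm_apply, Equiv.prodCongr_apply,
        Prod.map, famF, Equiv.symm_apply_apply, ← hr, ← hs]
      exact fin2_pair _ _ _ _ _ _
    have h3 : ((Finset.univ : Finset ((Fin 2 × Fin 2) × (Fin m × Fin n))).filter
          (fun t => t.1.2 = (fun a ij => x - a - gg H r ij) t.1.1 t.2 ∧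
            (fun ij => gg H s ij - gg H r ij = y - x) t.2)).card
        = 2 * ((Finset.univ : Finset (Fin m × Fin n)).filter
            (fun ij => gg H s ij - gg H r ij = y - x)).card :=
      card_pair (fun a ij => x - a - gg H r ij) (fun ij => gg H s ij - gg H r ij = y - x)
    have h4 : ((Finset.univ : Finset (Fin m × Fin n)).filter
          (fun ij => gg H s ij - gg H r ij = y - x)).card * 2 = m * n := by
      rcases fin2_cases (y - x) with hd | hd
      · have he : ((Finset.univ : Finset (Fin m × Fin n)).filter
              (fun ij => gg H s ij - gg H r ij = y - x)).card
            = ((Finset.univ : Finset (Fin m × Fin n)).filter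
              (fun ij => (fun c => H s c = H r c) (finProdFinEquiv ij))).card := by
          refine card_filter_congr _ _ fun ij => ?_
          rw [hd, fin2_sub_zero]
          exact g_eq_iff (hH.1 s _) (hH.1 r _)
        rw [he, card_filter_equiv finProdFinEquiv (fun c => H s c = H r c)]
        exact had_rows hH hrs.symm
      · have he : ((Finset.univ : Finset (Fin m × Fin n)).filter
              (fun ij => gg H s ij - gg H r ij = y - x)).card
            = ((Finset.univ : Finset (Fin m × Fin n)).filter
              (fun ij => (fun c => ¬ H s c = H r c) (finProdFinEquiv ij))).card := by
          refine card_filter_congr _ _ fun ij => ?_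
          rw [hd, fin2_sub_one]
          exact not_congr (g_eq_iff (hH.1 s _) (hH.1 r _))
        rw [he, card_filter_equiv finProdFinEquiv (fun c => ¬ H s c = H r c)]
        exact had_rows_ne hH hrs.symm
    rw [h1, h2, h3]
    calc 2 * ((Finset.univ : Finset (Fin m × Fin n)).filter
            (fun ij => gg H s ij - gg H r ij = y - x)).card * 2 ^ 2
        = ((Finset.univ : Finset (Fin m × Fin n)).filter
            (fun ij => gg H s ij - gg H r ij = y - x)).card * 2 * 4 := by ring
      _ = (m * n) * 4 := by rw [h4]
      _ = 2 * m * (2 * n) := by ring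
end

section
/- There exists a set of k mutually orthogonal frequency rectangles of type FR(2, 2n; 2) (a k-MOFR(2,2n;2)) if and only if there exists an orthogonal array OA(2n, k, 2, 2). -/
open Finset

lemma card_prod_split (N : ℕ) (P : Fin 2 × Fin N → Prop) [DecidablePred P] :
    ((univ : Finset (Fin 2 × Fin N)).filter P).card =
    ((univ : Finset (Fin N)).filter (fun j => P (0, j))).card +
    ((univ : Finset (Fin N)).filter (fun j => P (1, j))).card := by
  rw [Finset.card_filter, Finset.card_filter, Finset.card_filter,
    Fintype.sum_prod_type, Fin.sum_univ_two]

lemma card_filter_split {α} [Fintype α] (P : α → Prop) [DecidablePred P]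
    (f : α → Fin 2) (b : Fin 2) :
    (univ.filter fun x => P x ∧ f x = b).card +
    (univ.filter fun x => P x ∧ f x = b + 1).card = (univ.filter P).card := by
  rw [Finset.card_filter, Finset.card_filter, Finset.card_filter, ← Finset.sum_add_distrib]
  refine Finset.sum_congr rfl fun x _ => ?_
  have h2 : ∀ v b : Fin 2, ((if v = b then 1 else 0) + (if v = b + 1 then 1 else 0) : ℕ) = 1 := by
    decide
  by_cases h : P x
  · simp only [h, true_and]; exact h2 (f x) b
  · simp [h]

lemma row_compl {n : ℕ} (F : Fin 2 → Fin (2*n) → Fin 2)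
    (h : ∀ j : Fin (2*n), ∀ s : Fin 2,
      ((univ : Finset (Fin 2)).filter (fun i => F i j = s)).card * 2 = 2)
    (j : Fin (2*n)) : F 1 j = F 0 j + 1 := by
  by_contra hne
  have heq : F 1 j = F 0 j :=
    (by decide : ∀ x y : Fin 2, x ≠ y + 1 → x = y) (F 1 j) (F 0 j) hne
  have h' := h j (F 0 j + 1)
  rw [Finset.card_filter, Fin.sum_univ_two, heq] at h'
  have : F 0 j ≠ F 0 j + 1 := (by decide : ∀ x : Fin 2, x ≠ x + 1) (F 0 j)
  simp [this] at h'

lemma forward_dir (n k : ℕ) (F : Fin k → Fin 2 → Fin (2 * n) → Fin 2)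
    (hF : IsMOFR 2 (2 * n) 2 k F) : IsOA (2 * n) k 2 2 (fun r i => F i 0 r) := by
  intro c hc y
  have hij : c 0 ≠ c 1 := fun h => absurd (hc h) (by decide)
  simp only [Fin.forall_fin_two]
  have hcompl : ∀ (i : Fin k) (r : Fin (2*n)), F i 1 r = F i 0 r + 1 :=
    fun i => row_compl (F i) (fun j s => (hF.1 i).2 j s)
  have hshift : ∀ x a : Fin 2, (x + 1 = a) ↔ (x = a + 1) := by decide
  have horth := hF.2 (c 0) (c 1) hij (y 0) (y 1)
  rw [card_prod_split] at horth
  have e2 : (univ.filter (fun r : Fin (2*n) => F (c 0) 1 r = y 0 ∧ F (c 1) 1 r = y 1)) =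
      (univ.filter (fun r => F (c 0) 0 r = y 0 + 1 ∧ F (c 1) 0 r = y 1 + 1)) := by
    apply Finset.filter_congr; intro r _
    rw [hcompl (c 0) r, hcompl (c 1) r, hshift, hshift]
  simp only [] at horth
  rw [e2] at horth
  have hsplit1 := card_filter_split (fun r : Fin (2*n) => F (c 0) 0 r = y 0)
      (fun r => F (c 1) 0 r) (y 1)
  have hrowA := (hF.1 (c 0)).1 0 (y 0)
  have hsplit2 := card_filter_split (fun r : Fin (2*n) => F (c 1) 0 r = y 1 + 1)
      (fun r => F (c 0) 0 r) (y 0)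
  have hrowB := (hF.1 (c 1)).1 0 (y 1 + 1)
  have ec1 : (univ.filter (fun r : Fin (2*n) => F (c 1) 0 r = y 1 + 1 ∧ F (c 0) 0 r = y 0)) =
      (univ.filter (fun r => F (c 0) 0 r = y 0 ∧ F (c 1) 0 r = y 1 + 1)) :=
    Finset.filter_congr fun r _ => and_comm
  have ec2 : (univ.filter (fun r : Fin (2*n) => F (c 1) 0 r = y 1 + 1 ∧ F (c 0) 0 r = y 0 + 1)) =
      (univ.filter (fun r => F (c 0) 0 r = y 0 + 1 ∧ F (c 1) 0 r = y 1 + 1)) :=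
    Finset.filter_congr fun r _ => and_comm
  rw [ec1, ec2] at hsplit2
  have hpow : (2:ℕ)^2 = 4 := rfl
  rw [hpow] at horth ⊢
  omega

lemma card_lt_n (n : ℕ) :
    ((univ : Finset (Fin (2*n))).filter fun j : Fin (2*n) => (j:ℕ) < n).card = n := by
  have h : ((univ : Finset (Fin (2*n))).filter fun j : Fin (2*n) => (j:ℕ) < n)
      = (Finset.range n).attachFin (fun m hm => by rw [Finset.mem_range] at hm; omega) := by
    ext j; simp [Finset.mem_attachFin]
  rw [h, Finset.card_attachFin, Finset.card_range]

lemma small_mofr (n k : ℕ) (hk : k ≤ 1) :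
    ∃ F : Fin k → Fin 2 → Fin (2*n) → Fin 2, IsMOFR 2 (2*n) 2 k F := by
  refine ⟨fun _ r j => if (j:ℕ) < n then r else r + 1, ?_, ?_⟩
  · intro i
    constructor
    · intro r s
      rcases (by decide : ∀ s r : Fin 2, s = r ∨ s = r + 1) s r with h | h
      · have e : (univ.filter fun j : Fin (2*n) =>
            (if (j:ℕ) < n then r else r + 1) = s)
            = (univ.filter fun j : Fin (2*n) => (j:ℕ) < n) := by
          apply Finset.filter_congr; intro j _
          by_cases hj : (j:ℕ) < n
          · simp [hj, h]
          · simp [hj, h]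
        rw [e, card_lt_n]; ring
      · have e : (univ.filter fun j : Fin (2*n) =>
            (if (j:ℕ) < n then r else r + 1) = s)
            = (univ.filter fun j : Fin (2*n) => ¬ (j:ℕ) < n) := by
          apply Finset.filter_congr; intro j _
          by_cases hj : (j:ℕ) < n
          · simp [hj, h]
          · simp [hj, h]
        have h2 := Finset.card_filter_add_card_filter_not
          (s := (univ : Finset (Fin (2*n)))) (p := fun j : Fin (2*n) => (j:ℕ) < n)
        rw [Finset.card_univ, Fintype.card_fin, card_lt_n] at h2
        rw [e]; omega
    · intro j s
      by_cases hj : (j:ℕ) < n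
      · have e : (univ.filter fun r : Fin 2 => (if (j:ℕ) < n then r else r + 1) = s)
            = (univ.filter fun r : Fin 2 => r = s) := by
          apply Finset.filter_congr; intro r _; simp [hj]
        rw [e, Finset.filter_eq']; simp
      · have e : (univ.filter fun r : Fin 2 => (if (j:ℕ) < n then r else r + 1) = s)
            = (univ.filter fun r : Fin 2 => r = s + 1) := by
          apply Finset.filter_congr; intro r _; simp [hj]
          exact (by decide : ∀ r s : Fin 2, r + 1 = s ↔ r = s + 1) r s
        rw [e, Finset.filter_eq']; simp
  · intro i j hij
    exact absurd (Fin.ext (by omega)) hij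

lemma pair_count (n k : ℕ) (A : Fin (2*n) → Fin k → Fin 2)
    (hA : IsOA (2*n) k 2 2 A) {i j : Fin k} (hij : i ≠ j) (a b : Fin 2) :
    ((univ : Finset (Fin (2*n))).filter fun r => A r i = a ∧ A r j = b).card * 4 = 2 * n := by
  have hinj : Function.Injective ![i, j] := by
    intro s t hst
    fin_cases s <;> fin_cases t <;> simp_all
  have h := hA ![i, j] hinj ![a, b]
  have e : ((univ : Finset (Fin (2*n))).filter fun r => ∀ s, A r (![i,j] s) = ![a,b] s)
      = ((univ : Finset (Fin (2*n))).filter fun r => A r i = a ∧ A r j = b) :=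
    Finset.filter_congr fun r _ => Fin.forall_fin_two
  rw [e] at h
  rw [show (2:ℕ)^2 = 4 from rfl] at h
  omega

lemma col_count (n k : ℕ) (A : Fin (2*n) → Fin k → Fin 2)
    (hA : IsOA (2*n) k 2 2 A) (hk : 2 ≤ k) (i : Fin k) (a : Fin 2) :
    ((univ : Finset (Fin (2*n))).filter fun r => A r i = a).card * 2 = 2 * n := by
  obtain ⟨i', hi'⟩ := Fintype.exists_ne_of_one_lt_card (by simp; omega) i
  have h0 := pair_count n k A hA (Ne.symm hi') a 0
  have h1 := pair_count n k A hA (Ne.symm hi') a 1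
  have hsp := card_filter_split (fun r : Fin (2*n) => A r i = a) (fun r => A r i') 0
  rw [show (0:Fin 2)+1 = 1 from rfl] at hsp
  omega

lemma reverse_big (n k : ℕ) (A : Fin (2*n) → Fin k → Fin 2)
    (hA : IsOA (2*n) k 2 2 A) (hk : 2 ≤ k) :
    ∃ F : Fin k → Fin 2 → Fin (2*n) → Fin 2, IsMOFR 2 (2*n) 2 k F := by
  refine ⟨fun i r j => A j i + r, ?_, ?_⟩
  · intro i
    constructor
    · intro r s
      have e : (univ.filter fun j : Fin (2*n) => A j i + r = s)
          = (univ.filter fun j : Fin (2*n) => A j i = s + r) :=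
        Finset.filter_congr fun jj _ =>
          (by decide : ∀ x r s : Fin 2, x + r = s ↔ x = s + r) _ r s
      rw [e, col_count n k A hA hk i (s + r)]
    · intro j s
      have e : (univ.filter fun r : Fin 2 => A j i + r = s)
          = (univ.filter fun r : Fin 2 => r = s + A j i) :=
        Finset.filter_congr fun rr _ =>
          (by decide : ∀ x r s : Fin 2, x + r = s ↔ r = s + x) _ rr s
      rw [e, Finset.filter_eq']; simp
  · intro i j hij a b
    rw [card_prod_split]
    have e0 : (univ.filter fun r : Fin (2*n) => A r i + 0 = a ∧ A r j + 0 = b)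
        = (univ.filter fun r : Fin (2*n) => A r i = a ∧ A r j = b) :=
      Finset.filter_congr fun r _ => by
        rw [(by decide : ∀ x a : Fin 2, x + 0 = a ↔ x = a) _ a,
            (by decide : ∀ x a : Fin 2, x + 0 = a ↔ x = a) _ b]
    have e1 : (univ.filter fun r : Fin (2*n) => A r i + 1 = a ∧ A r j + 1 = b)
        = (univ.filter fun r : Fin (2*n) => A r i = a + 1 ∧ A r j = b + 1) :=
      Finset.filter_congr fun r _ => by
        rw [(by decide : ∀ x a : Fin 2, x + 1 = a ↔ x = a + 1) _ a,
            (by decide : ∀ x a : Fin 2, x + 1 = a ↔ x = a + 1) _ b]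
    simp only []
    rw [e0, e1]
    have h0 := pair_count n k A hA hij a b
    have h1 := pair_count n k A hA hij (a+1) (b+1)
    rw [show (2:ℕ)^2 = 4 from rfl]
    omega

/-- A k-MOFR(2,2n;2) exists iff an OA(2n,k,2,2) exists. -/
theorem mofr_iff_oa (n k : ℕ) :
    (∃ F : Fin k → Fin 2 → Fin (2 * n) → Fin 2, IsMOFR 2 (2 * n) 2 k F) ↔
    (∃ A : Fin (2 * n) → Fin k → Fin 2, IsOA (2 * n) k 2 2 A) := by
  constructor
  · rintro ⟨F, hF⟩
    exact ⟨fun r i => F i 0 r, forward_dir n k F hF⟩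
  · rintro ⟨A, hA⟩
    by_cases hk : 2 ≤ k
    · exact reverse_big n k A hA hk
    · exact small_mofr n k (by omega)
end

section
/- Suppose there exists a Hadamard matrix of order 4a. Then there exists a set of (4a−2) mutually orthogonal frequency rectangles of type FR(4, 2a; 2), i.e., a (4a−2)-MOFR(4,2a;2). -/
lemma count_one {α : Type*} [Fintype α] (f : α → ℤ)
    (hf : ∀ x, f x = 1 ∨ f x = -1) :
    (2:ℤ) * (Finset.univ.filter (fun x => f x = 1)).card
      = Fintype.card α + ∑ x, f x := by
  classical
  have hsplit := Finset.sum_filter_add_sum_filter_not Finset.univ (fun x => f x = 1) f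
  have hA : ∑ x ∈ Finset.univ.filter (fun x => f x = 1), f x
      = ((Finset.univ.filter (fun x => f x = 1)).card : ℤ) := by
    rw [Finset.sum_congr rfl (fun x hx => (Finset.mem_filter.mp hx).2)]
    simp
  have hB : ∑ x ∈ Finset.univ.filter (fun x => ¬ f x = 1), f x
      = -((Finset.univ.filter (fun x => ¬ f x = 1)).card : ℤ) := by
    rw [Finset.sum_congr rfl (fun x hx => show f x = -1 from
      (hf x).resolve_left (Finset.mem_filter.mp hx).2)]
    simp
  have hcard := Finset.card_filter_add_card_filter_not (s := Finset.univ)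
    (p := fun x => f x = 1)
  rw [Finset.card_univ] at hcard
  have : ((Finset.univ.filter (fun x => f x = 1)).card : ℤ)
      + ((Finset.univ.filter (fun x => ¬ f x = 1)).card : ℤ) = (Fintype.card α : ℤ) := by
    exact_mod_cast hcard
  linarith

lemma count_pair {α : Type*} [Fintype α] (f g : α → ℤ)
    (hf : ∀ x, f x = 1 ∨ f x = -1) (hg : ∀ x, g x = 1 ∨ g x = -1) :
    (4:ℤ) * (Finset.univ.filter (fun x => f x = 1 ∧ g x = 1)).card
      = Fintype.card α + ∑ x, f x + ∑ x, g x + ∑ x, f x * g x := by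
  classical
  have key : ∑ x, (1 + f x) * (1 + g x)
      = 4 * ((Finset.univ.filter (fun x => f x = 1 ∧ g x = 1)).card : ℤ) := by
    rw [← Finset.sum_filter_add_sum_filter_not Finset.univ (fun x => f x = 1 ∧ g x = 1)]
    have hA : ∑ x ∈ Finset.univ.filter (fun x => f x = 1 ∧ g x = 1), (1 + f x) * (1 + g x)
        = ∑ _x ∈ Finset.univ.filter (fun x => f x = 1 ∧ g x = 1), (4:ℤ) :=
      Finset.sum_congr rfl (fun x hx => by
        obtain ⟨h1, h2⟩ := (Finset.mem_filter.mp hx).2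
        rw [h1, h2]; norm_num)
    have hB : ∑ x ∈ Finset.univ.filter (fun x => ¬(f x = 1 ∧ g x = 1)), (1 + f x) * (1 + g x)
        = 0 := by
      apply Finset.sum_eq_zero
      intro x hx
      have hx' := (Finset.mem_filter.mp hx).2
      rcases hf x with h1 | h1
      · have h2 : g x = -1 := (hg x).resolve_left (fun h2 => hx' ⟨h1, h2⟩)
        rw [h2]; ring
      · rw [h1]; ring
    rw [hA, hB, Finset.sum_const, add_zero]
    push_cast; ring
  have expand : ∑ x, (1 + f x) * (1 + g x)
      = Fintype.card α + ∑ x, f x + ∑ x, g x + ∑ x, f x * g x := by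
    have : ∀ x, (1 + f x) * (1 + g x) = 1 + f x + g x + f x * g x := fun x => by ring
    rw [Finset.sum_congr rfl (fun x _ => this x)]
    rw [Finset.sum_add_distrib, Finset.sum_add_distrib, Finset.sum_add_distrib,
      Finset.sum_const, Finset.card_univ]
    push_cast; ring
  linarith

lemma toSym_eq {z : ℤ} (hz : z = 1 ∨ z = -1) (s : Fin 2) :
    ((if z = 1 then (0:Fin 2) else 1) = s) ↔ (if s = 0 then (1:ℤ) else -1) * z = 1 := by
  rcases hz with h | h <;> fin_cases s <;> simp [h]


/-- A Hadamard matrix of order 4a yields a (4a-2)-MOFR(4,2a;2). -/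
theorem hadamard_to_mofr_4_2a (a : ℕ)
    (h : ∃ H : Matrix (Fin (4 * a)) (Fin (4 * a)) ℤ, IsHadamard (4 * a) H) :
    ∃ F : Fin (4 * a - 2) → Fin 4 → Fin (2 * a) → Fin 2,
      IsMOFR 4 (2 * a) 2 (4 * a - 2) F := by
  rcases Nat.eq_zero_or_pos a with ha0 | ha
  · subst ha0
    exact ⟨fun k => Fin.elim0 k, fun k => Fin.elim0 k, fun i _ hij => Fin.elim0 i⟩
  obtain ⟨H, hH⟩ := h
  obtain ⟨hent, hmul⟩ := hH
  classical
  haveI : NeZero (4 * a) := ⟨by omega⟩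
  have horthH : ∀ i k : Fin (4 * a), i ≠ k → ∑ j, H i j * H k j = 0 := by
    intro i k hik
    have := congrFun (congrFun hmul i) k
    simpa [Matrix.mul_apply, Matrix.transpose_apply, Matrix.smul_apply,
      Matrix.one_apply, hik] using this
  set G : Fin (4*a) → Fin (4*a) → ℤ := fun i j => H i j * H 0 j with hGdef
  have hGent : ∀ i j, G i j = 1 ∨ G i j = -1 := by
    intro i j
    rcases hent i j with h1 | h1 <;> rcases hent 0 j with h2 | h2 <;>
      simp [hGdef, h1, h2]
  have hG0 : ∀ j, G 0 j = 1 := by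
    intro j; rcases hent 0 j with h | h <;> simp [hGdef, h]
  have hGorth : ∀ i k : Fin (4*a), i ≠ k → ∑ j, G i j * G k j = 0 := by
    intro i k hik
    have : ∀ j, G i j * G k j = H i j * H k j := by
      intro j
      have : H 0 j * H 0 j = 1 := by rcases hent 0 j with h | h <;> rw [h] <;> norm_num
      simp only [hGdef]
      calc H i j * H 0 j * (H k j * H 0 j) = H i j * H k j * (H 0 j * H 0 j) := by ring
        _ = H i j * H k j := by rw [this, mul_one]
    rw [Finset.sum_congr rfl (fun j _ => this j)]
    exact horthH i k hik
  have hval1 : ((1 : Fin (4*a)) : ℕ) = 1 := by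
    rw [Fin.val_one']; exact Nat.mod_eq_of_lt (by omega)
  have h01 : (0 : Fin (4*a)) ≠ 1 := by
    intro hc
    have := congrArg Fin.val hc
    rw [Fin.val_zero, hval1] at this
    omega
  have hrowsum : ∀ i : Fin (4*a), i ≠ 0 → ∑ j, G i j = 0 := by
    intro i hi
    have := hGorth i 0 hi
    calc ∑ j, G i j = ∑ j, G i j * G 0 j := by
          exact Finset.sum_congr rfl (fun j _ => by rw [hG0, mul_one])
      _ = 0 := this
  -- the set where row 1 equals +1
  set S : Finset (Fin (4*a)) := Finset.univ.filter (fun j => G 1 j = 1) with hSdef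
  set Sc : Finset (Fin (4*a)) := Finset.univ.filter (fun j => ¬ G 1 j = 1) with hScdef
  have hrow1 : ∑ j, G 1 j = 0 := hrowsum 1 (Ne.symm h01)
  have hcount1 := count_one (G 1) (hGent 1)
  rw [Fintype.card_fin, hrow1, add_zero] at hcount1
  have hScard : S.card = 2 * a := by
    have h' : (S.card : ℤ) = 2 * a := by
      rw [hSdef]; push_cast at hcount1 ⊢; linarith
    exact_mod_cast h'
  have hcardsum : S.card + Sc.card = 4 * a := by
    have := Finset.card_filter_add_card_filter_not
      (s := (Finset.univ : Finset (Fin (4*a)))) (p := fun j => G 1 j = 1)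
    rw [Finset.card_univ, Fintype.card_fin] at this
    rw [hSdef, hScdef]
    exact this
  have hSccard : Sc.card = 2 * a := by omega
  -- equivalences
  let e1 : Fin (2*a) ≃ {x // x ∈ S} := (finCongr hScard.symm).trans S.equivFin.symm
  let e2 : Fin (2*a) ≃ {x // x ∈ Sc} := (finCongr hSccard.symm).trans Sc.equivFin.symm
  have hsum1 : ∀ f : Fin (4*a) → ℤ, ∑ c : Fin (2*a), f (e1 c) = ∑ j ∈ S, f j := by
    intro f
    rw [← Finset.sum_coe_sort S f]
    exact Equiv.sum_comp e1 (fun x => f x)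
  have hsum2 : ∀ f : Fin (4*a) → ℤ, ∑ c : Fin (2*a), f (e2 c) = ∑ j ∈ Sc, f j := by
    intro f
    rw [← Finset.sum_coe_sort Sc f]
    exact Equiv.sum_comp e2 (fun x => f x)
  have hSsplit : ∀ f : Fin (4*a) → ℤ, (∑ j ∈ S, f j) + (∑ j ∈ Sc, f j) = ∑ j, f j := by
    intro f
    rw [hSdef, hScdef]
    exact Finset.sum_filter_add_sum_filter_not Finset.univ (fun j => G 1 j = 1) f
  have hSdiff : ∀ i : Fin (4*a), (∑ j ∈ S, G i j) - (∑ j ∈ Sc, G i j) = ∑ j, G i j * G 1 j := by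
    intro i
    have hA : ∑ j ∈ S, G i j * G 1 j = ∑ j ∈ S, G i j :=
      Finset.sum_congr rfl (fun j hj => by
        have hj2 : j ∈ Finset.univ.filter (fun j => G 1 j = 1) := by rwa [hSdef] at hj
        have hj' : G 1 j = 1 := (Finset.mem_filter.mp hj2).2
        rw [hj', mul_one])
    have hB : ∑ j ∈ Sc, G i j * G 1 j = -∑ j ∈ Sc, G i j := by
      rw [← Finset.sum_neg_distrib]
      exact Finset.sum_congr rfl (fun j hj => by
        have hj2 : j ∈ Finset.univ.filter (fun j => ¬ G 1 j = 1) := by rwa [hScdef] at hj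
        have hj' : G 1 j = -1 := (hGent 1 j).resolve_left (Finset.mem_filter.mp hj2).2
        rw [hj']; ring)
    have hC := hSsplit (fun j => G i j * G 1 j)
    linarith
  -- index map
  have hidx : ∀ k : Fin (4*a-2), k.val + 2 < 4*a := fun k => by have := k.isLt; omega
  set idx : Fin (4*a-2) → Fin (4*a) := fun k => ⟨k.val + 2, hidx k⟩ with hidxdef
  have hidx0 : ∀ k, idx k ≠ 0 := by
    intro k hc
    have := congrArg Fin.val hc
    simp [hidxdef] at this
  have hidx1 : ∀ k, idx k ≠ 1 := by
    intro k hc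
    have hcv := congrArg Fin.val hc
    rw [hval1] at hcv
    simp [hidxdef] at hcv
  have hidxinj : ∀ k l : Fin (4*a-2), k ≠ l → idx k ≠ idx l := by
    intro k l hkl hc
    apply hkl
    have hcv := congrArg Fin.val hc
    simp [hidxdef] at hcv
    exact Fin.ext hcv
  -- key zero sums
  have hSzero : ∀ k : Fin (4*a-2),
      (∑ j ∈ S, G (idx k) j) = 0 ∧ (∑ j ∈ Sc, G (idx k) j) = 0 := by
    intro k
    have h1 : (∑ j ∈ S, G (idx k) j) + (∑ j ∈ Sc, G (idx k) j) = 0 := by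
      rw [hSsplit]; exact hrowsum _ (hidx0 k)
    have h2 : (∑ j ∈ S, G (idx k) j) - (∑ j ∈ Sc, G (idx k) j) = 0 := by
      rw [hSdiff]; exact hGorth _ _ (hidx1 k)
    constructor <;> linarith
  have hpairzero : ∀ k l : Fin (4*a-2), k ≠ l →
      (∑ j ∈ S, G (idx k) j * G (idx l) j) + (∑ j ∈ Sc, G (idx k) j * G (idx l) j) = 0 := by
    intro k l hkl
    rw [hSsplit]
    exact hGorth _ _ (hidxinj k l hkl)
  -- the ±1 matrices
  set M : Fin (4*a-2) → Fin 4 → Fin (2*a) → ℤ := fun k r c =>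
    if r.val = 0 then G (idx k) (e1 c) else if r.val = 1 then G (idx k) (e2 c)
    else if r.val = 2 then -G (idx k) (e1 c) else -G (idx k) (e2 c) with hMdef
  have hMent : ∀ k r c, M k r c = 1 ∨ M k r c = -1 := by
    intro k r c
    rw [hMdef]
    simp only
    split_ifs
    · exact hGent _ _
    · exact hGent _ _
    · rcases hGent (idx k) (e1 c) with h | h <;> simp [h]
    · rcases hGent (idx k) (e2 c) with h | h <;> simp [h]
  have hu : ∀ k, ∑ c, G (idx k) (e1 c) = 0 := by
    intro k; rw [hsum1 (fun j => G (idx k) j)]; exact (hSzero k).1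
  have hv : ∀ k, ∑ c, G (idx k) (e2 c) = 0 := by
    intro k; rw [hsum2 (fun j => G (idx k) j)]; exact (hSzero k).2
  have hMrow : ∀ k r, ∑ c, M k r c = 0 := by
    intro k r
    fin_cases r <;> rw [hMdef] <;> simp <;>
      first
        | exact hu k
        | exact hv k
  have hM0 : ∀ k c, M k 0 c = G (idx k) (e1 c) := fun k c => rfl
  have hM1 : ∀ k c, M k 1 c = G (idx k) (e2 c) := fun k c => rfl
  have hM2 : ∀ k c, M k 2 c = -G (idx k) (e1 c) := fun k c => rfl
  have hM3 : ∀ k c, M k 3 c = -G (idx k) (e2 c) := fun k c => rfl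
  have hMcol : ∀ k c, ∑ r : Fin 4, M k r c = 0 := by
    intro k c
    rw [Fin.sum_univ_four, hM0, hM1, hM2, hM3]
    ring
  have hMgrid : ∀ k, ∑ p : Fin 4 × Fin (2*a), M k p.1 p.2 = 0 := by
    intro k
    rw [Fintype.sum_prod_type]
    rw [Finset.sum_congr rfl (fun r _ => hMrow k r)]
    simp
  have hMMgrid : ∀ k l, k ≠ l → ∑ p : Fin 4 × Fin (2*a), M k p.1 p.2 * M l p.1 p.2 = 0 := by
    intro k l hkl
    rw [Fintype.sum_prod_type, Fin.sum_univ_four]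
    have huu : ∑ c, M k 0 c * M l 0 c = ∑ j ∈ S, G (idx k) j * G (idx l) j := by
      simp only [hM0]
      exact hsum1 (fun j => G (idx k) j * G (idx l) j)
    have hvv : ∑ c, M k 1 c * M l 1 c = ∑ j ∈ Sc, G (idx k) j * G (idx l) j := by
      simp only [hM1]
      exact hsum2 (fun j => G (idx k) j * G (idx l) j)
    have huu2 : ∑ c, M k 2 c * M l 2 c = ∑ j ∈ S, G (idx k) j * G (idx l) j := by
      simp only [hM2, neg_mul_neg]
      exact hsum1 (fun j => G (idx k) j * G (idx l) j)
    have hvv2 : ∑ c, M k 3 c * M l 3 c = ∑ j ∈ Sc, G (idx k) j * G (idx l) j := by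
      simp only [hM3, neg_mul_neg]
      exact hsum2 (fun j => G (idx k) j * G (idx l) j)
    rw [huu, hvv, huu2, hvv2]
    have := hpairzero k l hkl
    linarith
  -- sign helper
  set sg : Fin 2 → ℤ := fun s => if s = 0 then 1 else -1 with hsgdef
  have hsgpm : ∀ (s : Fin 2) (z : ℤ), (z = 1 ∨ z = -1) → (sg s * z = 1 ∨ sg s * z = -1) := by
    intro s z hz
    rcases hz with h | h <;> fin_cases s <;> simp [hsgdef, h]
  -- the frequency rectangles
  set F : Fin (4*a-2) → Fin 4 → Fin (2*a) → Fin 2 :=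
    fun k r c => if M k r c = 1 then 0 else 1 with hFdef
  have hFiff : ∀ k r c (s : Fin 2), F k r c = s ↔ sg s * M k r c = 1 := by
    intro k r c s
    rw [hFdef, hsgdef]
    exact toSym_eq (hMent k r c) s
  unfold IsMOFR IsFreqRect OrthogonalFR
  refine ⟨F, ?_, ?_⟩
  · intro k
    constructor
    · intro r s
      have hfilt : (Finset.univ.filter (fun c : Fin (2*a) => F k r c = s))
          = Finset.univ.filter (fun c => sg s * M k r c = 1) :=
        Finset.filter_congr (fun c _ => hFiff k r c s)
      rw [hfilt]
      have hcnt := count_one (fun c => sg s * M k r c)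
        (fun c => hsgpm s _ (hMent k r c))
      rw [Fintype.card_fin] at hcnt
      have hz : ∑ c, sg s * M k r c = 0 := by
        rw [← Finset.mul_sum, hMrow, mul_zero]
      rw [hz, add_zero] at hcnt
      have h2 : ((Finset.univ.filter (fun c => sg s * M k r c = 1)).card * 2 : ℤ)
          = ((2 * a : ℕ) : ℤ) := by push_cast at hcnt ⊢; linarith
      exact_mod_cast h2
    · intro c s
      have hfilt : (Finset.univ.filter (fun r : Fin 4 => F k r c = s))
          = Finset.univ.filter (fun r => sg s * M k r c = 1) :=
        Finset.filter_congr (fun r _ => hFiff k r c s)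
      rw [hfilt]
      have hcnt := count_one (fun r : Fin 4 => sg s * M k r c)
        (fun r => hsgpm s _ (hMent k r c))
      rw [Fintype.card_fin] at hcnt
      have hz : ∑ r : Fin 4, sg s * M k r c = 0 := by
        rw [← Finset.mul_sum, hMcol, mul_zero]
      rw [hz, add_zero] at hcnt
      have h2 : ((Finset.univ.filter (fun r => sg s * M k r c = 1)).card * 2 : ℤ)
          = (4 : ℤ) := by push_cast at hcnt ⊢; linarith
      exact_mod_cast h2
  · intro k l hkl s1 s2
    have hfilt : ((Finset.univ : Finset (Fin 4 × Fin (2*a))).filter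
          (fun p => F k p.1 p.2 = s1 ∧ F l p.1 p.2 = s2))
        = Finset.univ.filter
          (fun p : Fin 4 × Fin (2*a) => sg s1 * M k p.1 p.2 = 1 ∧ sg s2 * M l p.1 p.2 = 1) :=
      Finset.filter_congr (fun p _ =>
        and_congr (hFiff k p.1 p.2 s1) (hFiff l p.1 p.2 s2))
    rw [hfilt]
    have hcnt := count_pair (fun p : Fin 4 × Fin (2*a) => sg s1 * M k p.1 p.2)
      (fun p => sg s2 * M l p.1 p.2)
      (fun p => hsgpm s1 _ (hMent k p.1 p.2)) (fun p => hsgpm s2 _ (hMent l p.1 p.2))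
    rw [Fintype.card_prod, Fintype.card_fin, Fintype.card_fin] at hcnt
    have hz1 : ∑ p : Fin 4 × Fin (2*a), sg s1 * M k p.1 p.2 = 0 := by
      rw [← Finset.mul_sum, hMgrid, mul_zero]
    have hz2 : ∑ p : Fin 4 × Fin (2*a), sg s2 * M l p.1 p.2 = 0 := by
      rw [← Finset.mul_sum, hMgrid, mul_zero]
    have hz3 : ∑ p : Fin 4 × Fin (2*a), (sg s1 * M k p.1 p.2) * (sg s2 * M l p.1 p.2) = 0 := by
      have : ∀ p : Fin 4 × Fin (2*a),
          (sg s1 * M k p.1 p.2) * (sg s2 * M l p.1 p.2)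
            = (sg s1 * sg s2) * (M k p.1 p.2 * M l p.1 p.2) := fun p => by ring
      rw [Finset.sum_congr rfl (fun p _ => this p), ← Finset.mul_sum,
        hMMgrid k l hkl, mul_zero]
    rw [hz1, hz2, hz3, add_zero, add_zero, add_zero] at hcnt
    have h2 : ((Finset.univ.filter
        (fun p : Fin 4 × Fin (2*a) => sg s1 * M k p.1 p.2 = 1 ∧ sg s2 * M l p.1 p.2 = 1)).card
          * 2 ^ 2 : ℤ) = ((4 * (2 * a) : ℕ) : ℤ) := by push_cast at hcnt ⊢; linarith
    exact_mod_cast h2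
end

section
/- Let p be an odd prime and let G be the complete graph on the vertex set V = {∞} ∪ {0,1,…,p−3}. For each i ∈ {1,…,p−2}, let S_i be the star with edge set {{i,∞}} ∪ {{i, i+k mod (p−2)} : k = 1,…,(p−3)/2}, where arithmetic on {0,1,…,p−3} is modulo p−2. Then the edge sets of S₁, S₂, …, S_{p−2} partition the edge set of G. -/
/-- The vertex of the set `{0, 1, ..., p-3}` (encoded in `Option (Fin (p-2))`,
with `none` playing the role of `∞`) carrying the residue of `a` modulo `p-2`. -/
def vtx (p a : ℕ) : Option (Fin (p - 2)) :=
  if h : a % (p - 2) < p - 2 then some ⟨a % (p - 2), h⟩ else none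

/-- The star `S_i` with edge set `{{i,∞}} ∪ {{i, i+k mod (p-2)} : 1 ≤ k ≤ (p-3)/2}`. -/
def starEdges (p i : ℕ) : Finset (Sym2 (Option (Fin (p - 2)))) :=
  insert s(vtx p i, (none : Option (Fin (p - 2))))
    ((Finset.Icc 1 ((p - 3) / 2)).image (fun k => s(vtx p i, vtx p (i + k))))

lemma vtx_def (p a : ℕ) (h : 0 < p - 2) :
    vtx p a = some ⟨a % (p - 2), Nat.mod_lt a h⟩ := by
  simp [vtx, Nat.mod_lt a h]

lemma vtx_add (p i k : ℕ) : vtx p (i + k) = vtx p (i % (p - 2) + k) := by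
  have h : (i + k) % (p - 2) = (i % (p - 2) + k) % (p - 2) := by
    conv_rhs => rw [Nat.add_mod, Nat.mod_mod]
    rw [Nat.add_mod]
  unfold vtx
  rw [h]

lemma vtx_val (p : ℕ) (hn : 0 < p - 2) (x : Fin (p - 2)) : vtx p x.val = some x := by
  rw [vtx_def p _ hn]
  simp [Fin.ext_iff, Nat.mod_eq_of_lt x.isLt]

lemma vtx_eq_some (p i : ℕ) (hn : 0 < p - 2) (x : Fin (p - 2)) (h : i % (p - 2) = x.val) :
    vtx p i = some x := by
  rw [vtx_def p _ hn]
  exact congrArg some (Fin.ext h)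

lemma add_mod_cancel' (n i t : ℕ) (h : (i + t) % n = i % n) (h1 : 0 < t) (h2 : t < n) : False := by
  have h' : i + t ≡ i + 0 [MOD n] := by simpa [Nat.ModEq] using h
  have := Nat.ModEq.add_left_cancel' i h'
  rw [Nat.ModEq, Nat.mod_eq_of_lt h2, Nat.zero_mod] at this
  omega

lemma mod_inj (n i j : ℕ) (hi : 1 ≤ i) (hi' : i ≤ n) (hj : 1 ≤ j) (hj' : j ≤ n)
    (h : i % n = j % n) : i = j := by
  rcases eq_or_lt_of_le hi' with rfl | hi2 <;> rcases eq_or_lt_of_le hj' with h' | hj2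
  · omega
  · rw [Nat.mod_self, Nat.mod_eq_of_lt hj2] at h; omega
  · rw [h', Nat.mod_self, Nat.mod_eq_of_lt hi2] at h; omega
  · rw [Nat.mod_eq_of_lt hi2, Nat.mod_eq_of_lt hj2] at h; exact h

lemma exists_center (p : ℕ) (hn : 0 < p - 2) (r : ℕ) (hr : r < p - 2) :
    ∃ i, 1 ≤ i ∧ i ≤ p - 2 ∧ i % (p - 2) = r := by
  rcases Nat.eq_zero_or_pos r with rfl | hr0
  · exact ⟨p - 2, hn, le_refl _, Nat.mod_self _⟩
  · exact ⟨r, hr0, le_of_lt hr, Nat.mod_eq_of_lt hr⟩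

lemma not_isDiag (p i : ℕ) (hn : 0 < p - 2) (hm : p - 2 = 2 * ((p - 3) / 2) + 1)
    (e : Sym2 (Option (Fin (p - 2)))) (he : e ∈ starEdges p i) : ¬ e.IsDiag := by
  simp only [starEdges, Finset.mem_insert, Finset.mem_image, Finset.mem_Icc] at he
  rcases he with rfl | ⟨k, ⟨hk1, hk2⟩, rfl⟩
  · rw [vtx_def p i hn]; simp
  · rw [vtx_def p i hn, vtx_def p _ hn]
    simp only [Sym2.mk_isDiag_iff, Option.some_inj, Fin.mk.injEq]
    intro h
    exact add_mod_cancel' (p - 2) i k h.symm hk1 (by omega)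

lemma cover_pair (p : ℕ) (hn : 0 < p - 2) (hm : p - 2 = 2 * ((p - 3) / 2) + 1)
    (x y : Fin (p - 2)) (hxy : x.val < y.val) :
    ∃ i, (1 ≤ i ∧ i ≤ p - 2) ∧
      s((some x : Option (Fin (p - 2))), some y) ∈ starEdges p i := by
  have hx := x.isLt
  have hy := y.isLt
  by_cases hd : y.val - x.val ≤ (p - 3) / 2
  · obtain ⟨i, hi1, hi2, hi3⟩ := exists_center p hn x.val hx
    refine ⟨i, ⟨hi1, hi2⟩, ?_⟩
    apply Finset.mem_insert_of_mem
    refine Finset.mem_image.mpr ⟨y.val - x.val, Finset.mem_Icc.mpr ⟨by omega, hd⟩, ?_⟩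
    have h1 : vtx p i = some x := vtx_eq_some p i hn x hi3
    have h2 : vtx p (i + (y.val - x.val)) = some y := by
      rw [vtx_add, hi3]
      have : x.val + (y.val - x.val) = y.val := by omega
      rw [this, vtx_val p hn]
    rw [h1, h2]
  · obtain ⟨i, hi1, hi2, hi3⟩ := exists_center p hn y.val hy
    refine ⟨i, ⟨hi1, hi2⟩, ?_⟩
    apply Finset.mem_insert_of_mem
    refine Finset.mem_image.mpr ⟨(p - 2) - (y.val - x.val),
      Finset.mem_Icc.mpr ⟨by omega, by omega⟩, ?_⟩
    have h1 : vtx p i = some y := vtx_eq_some p i hn y hi3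
    have h2 : vtx p (i + ((p - 2) - (y.val - x.val))) = some x := by
      rw [vtx_add, hi3]
      have h3 : y.val + ((p - 2) - (y.val - x.val)) = x.val + (p - 2) := by omega
      rw [h3]
      apply vtx_eq_some p _ hn
      rw [Nat.add_mod_right, Nat.mod_eq_of_lt hx]
    rw [h1, h2, Sym2.eq_swap]


/-- The stars `S_1, ..., S_{p-2}` partition the edge set of the complete graph on
`{∞} ∪ {0, ..., p-3}`. -/
theorem stars_partition (p : ℕ) (hp : p.Prime) (h3 : 3 ≤ p) :
    (∀ i ∈ Finset.Icc 1 (p - 2), ∀ j ∈ Finset.Icc 1 (p - 2), i ≠ j →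
      Disjoint (starEdges p i) (starEdges p j)) ∧
    (Finset.Icc 1 (p - 2)).biUnion (starEdges p)
      = (Finset.univ : Finset (Sym2 (Option (Fin (p - 2))))).filter
          (fun e => ¬ e.IsDiag) := by
  have hodd : p % 2 = 1 := Nat.odd_iff.mp (hp.odd_of_ne_two (by omega))
  have hn : 0 < p - 2 := by omega
  have hm : p - 2 = 2 * ((p - 3) / 2) + 1 := by omega
  constructor
  · intro i hi j hj hij
    rw [Finset.mem_Icc] at hi hj
    rw [Finset.disjoint_left]
    intro e hei hej
    have hvij : i % (p - 2) ≠ j % (p - 2) := fun h =>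
      hij (mod_inj (p - 2) i j hi.1 hi.2 hj.1 hj.2 h)
    simp only [starEdges, Finset.mem_insert, Finset.mem_image, Finset.mem_Icc] at hei hej
    rcases hei with rfl | ⟨k, ⟨hk1, hk2⟩, rfl⟩ <;>
      rcases hej with h2 | ⟨l, ⟨hl1, hl2⟩, h2⟩
    · rw [vtx_def p i hn, vtx_def p j hn] at h2
      simp only [Sym2.eq_iff, Option.some_inj, Fin.mk.injEq] at h2
      tauto
    · rw [vtx_def p i hn, vtx_def p j hn, vtx_def p (j + l) hn] at h2
      simp only [Sym2.eq_iff, Option.some_inj, Fin.mk.injEq] at h2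
      tauto
    · rw [vtx_def p i hn, vtx_def p (i + k) hn, vtx_def p j hn] at h2
      simp only [Sym2.eq_iff, Option.some_inj, Fin.mk.injEq] at h2
      tauto
    · rw [vtx_def p i hn, vtx_def p (i + k) hn, vtx_def p j hn, vtx_def p (j + l) hn] at h2
      simp only [Sym2.eq_iff, Option.some_inj, Fin.mk.injEq] at h2
      rcases h2 with ⟨ha, _⟩ | ⟨ha, hb⟩
      · exact hvij ha.symm
      · have key : (j + (l + k)) % (p - 2) = j % (p - 2) := by
          calc (j + (l + k)) % (p - 2) = ((j + l) + k) % (p - 2) := by rw [Nat.add_assoc]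
            _ = ((j + l) % (p - 2) + k) % (p - 2) := (Nat.mod_add_mod _ _ _).symm
            _ = (i % (p - 2) + k) % (p - 2) := by rw [hb]
            _ = (i + k) % (p - 2) := Nat.mod_add_mod _ _ _
            _ = j % (p - 2) := ha.symm
        exact add_mod_cancel' (p - 2) j (l + k) key (by omega) (by omega)
  · apply Finset.ext
    intro e
    induction e using Sym2.ind with
    | _ a b =>
      simp only [Finset.mem_biUnion, Finset.mem_filter, Finset.mem_univ, true_and,
        Finset.mem_Icc, Sym2.mk_isDiag_iff]
      constructor
      · rintro ⟨i, hi, he⟩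
        have := not_isDiag p i hn hm _ he
        rwa [Sym2.mk_isDiag_iff] at this
      · intro hab
        match a, b with
        | none, none => exact absurd rfl hab
        | some x, none =>
          obtain ⟨i, hi1, hi2, hi3⟩ := exists_center p hn x.val x.isLt
          refine ⟨i, ⟨hi1, hi2⟩, ?_⟩
          have h1 : s((some x : Option (Fin (p - 2))), none) = s(vtx p i, none) := by
            rw [vtx_eq_some p i hn x hi3]
          rw [h1, starEdges]
          exact Finset.mem_insert_self _ _
        | none, some x =>
          obtain ⟨i, hi1, hi2, hi3⟩ := exists_center p hn x.val x.isLt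
          refine ⟨i, ⟨hi1, hi2⟩, ?_⟩
          have h1 : s((none : Option (Fin (p - 2))), some x) = s(vtx p i, none) := by
            rw [vtx_eq_some p i hn x hi3, Sym2.eq_swap]
          rw [h1, starEdges]
          exact Finset.mem_insert_self _ _
        | some x, some y =>
          have hxy : x ≠ y := fun h => hab (by rw [h])
          rcases Nat.lt_trichotomy x.val y.val with h | h | h
          · exact cover_pair p hn hm x y h
          · exact absurd (Fin.ext h) hxy
          · obtain ⟨i, hi, he⟩ := cover_pair p hn hm y x h
            exact ⟨i, hi, by rwa [Sym2.eq_swap]⟩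
end

section
/- Let k, q ≥ 1 and let c, d be real numbers. Let N be the (kq)×(kq) real matrix consisting of k×k blocks of size q×q, whose k diagonal blocks each equal c·I_q and whose off-diagonal blocks each equal d·J_q, where I_q is the q×q identity matrix and J_q is the q×q all-ones matrix. Then the characteristic polynomial of N is (X − (c + q(k−1)d)) · (X − (c − qd))^{k−1} · (X − c)^{k(q−1)}; that is, N has eigenvalues c + q(k−1)d, c − qd, and c with multiplicities 1, k−1, and k(q−1), respectively. -/
/-!
Write `N = c • 1 + Eᵇ`, where `Eᵇ p p' = E p.1 p'.1` is the blow-up of the `k × k` matrix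
`E = d • (J_k - I_k)`. With `P` the `kq × k` block-membership matrix, `Eᵇ = P * (E * Pᵀ)` and
`E * Pᵀ * P = q • E`, so `charpoly Eᵇ = X ^ (kq - k) * charpoly (q • E)`. Finally `q • E` is the
rank-one matrix `qd • J_k` shifted by the scalar `-qd`, whose characteristic polynomial is explicit.
-/

open Polynomial Matrix

namespace Matrix

variable {R : Type*} [CommRing R] {m n : Type*} [Fintype m] [DecidableEq m] [Fintype n]
  [DecidableEq n]

theorem charpoly_add_scalar (M : Matrix n n R) (μ : R) :
    (M + scalar n μ).charpoly = M.charpoly.comp (X - C μ) := by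
  simpa [sub_eq_add_neg] using charpoly_sub_scalar M (-μ)

theorem charpoly_submatrix_fst [Nonempty n] (E : Matrix m m R) :
    (E.submatrix Prod.fst Prod.fst : Matrix (m × n) (m × n) R).charpoly =
      X ^ (Fintype.card (m × n) - Fintype.card m) * (Fintype.card n • E).charpoly := by
  have hle : Fintype.card m ≤ Fintype.card (m × n) := by
    rw [Fintype.card_prod]
    exact Nat.le_mul_of_pos_right _ Fintype.card_pos
  have hfactor : (E.submatrix Prod.fst Prod.fst : Matrix (m × n) (m × n) R) =
      (1 : Matrix m m R).submatrix Prod.fst id * E.submatrix id Prod.fst := by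
    ext p p'
    simp [mul_apply, one_apply]
  rw [hfactor, charpoly_mul_comm_of_le _ _ hle]
  congr 2
  ext i j
  simp [mul_apply, one_apply, Fintype.sum_prod_type]

theorem charpoly_of_ite_eq [Nonempty n] (a b : R) :
    (of fun i j : n => if i = j then b else a).charpoly =
      (X - C (b + (Fintype.card n - 1) * a)) * (X - C (b - a)) ^ (Fintype.card n - 1) := by
  have hdecomp : (of fun i j : n => if i = j then b else a) =
      vecMulVec (fun _ => a) (fun _ => 1) - scalar n (a - b) := by
    ext i j
    by_cases h : i = j <;> simp [h, vecMulVec_apply]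
  obtain ⟨r, hr⟩ : ∃ r, Fintype.card n = r + 1 := Nat.exists_eq_add_one.mpr Fintype.card_pos
  have hdot : (fun _ => a) ⬝ᵥ (fun _ : n => (1 : R)) = (r + 1 : R) * a := by
    simp [dotProduct, hr]
  rw [hdecomp, charpoly_sub_scalar, charpoly_vecMulVec, hr, Nat.add_sub_cancel, hdot,
    smul_eq_C_mul]
  simp only [sub_comp, mul_comp, pow_comp, X_comp, C_comp]
  simp only [Nat.cast_add, Nat.cast_one, add_sub_cancel_right, map_add, map_sub, map_mul,
    map_natCast, map_one]
  ring

end Matrix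

/-- The characteristic polynomial (hence the eigenvalues with multiplicities) of the
`kq × kq` block matrix with diagonal blocks `c·I_q` and off-diagonal blocks `d·J_q`:
the eigenvalues are `c + q(k-1)d`, `c - qd` and `c` with multiplicities `1`, `k-1`
and `k(q-1)` respectively. -/
theorem block_matrix_charpoly (k q : ℕ) (hk : 1 ≤ k) (hq : 1 ≤ q) (c d : ℝ) :
    (Matrix.of (fun p₁ p₂ : Fin k × Fin q =>
        if p₁.1 = p₂.1 then (if p₁.2 = p₂.2 then c else 0) else d)).charpoly
      = (X - C (c + (q : ℝ) * ((k : ℝ) - 1) * d)) *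
        (X - C (c - (q : ℝ) * d)) ^ (k - 1) *
        (X - C c) ^ (k * (q - 1)) := by
  have : Nonempty (Fin k) := Fin.pos_iff_nonempty.mp hk
  have : Nonempty (Fin q) := Fin.pos_iff_nonempty.mp hq
  set E : Matrix (Fin k) (Fin k) ℝ := of fun i j => if i = j then 0 else d
  have hblock : (Matrix.of (fun p₁ p₂ : Fin k × Fin q =>
        if p₁.1 = p₂.1 then (if p₁.2 = p₂.2 then c else 0) else d)) =
      E.submatrix Prod.fst Prod.fst + scalar _ c := by
    ext ⟨i, s⟩ ⟨j, t⟩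
    by_cases hij : i = j <;> by_cases hst : s = t <;> simp [E, hij, hst]
  have hscaled : Fintype.card (Fin q) • E = of fun i j => if i = j then 0 else (q * d : ℝ) := by
    ext i j
    by_cases hij : i = j <;> simp [E, hij]
  rw [hblock, charpoly_add_scalar, charpoly_submatrix_fst, hscaled, charpoly_of_ite_eq]
  simp only [Fintype.card_prod, Fintype.card_fin, ← Nat.mul_sub_one, mul_comp, pow_comp, sub_comp,
    X_comp, C_comp]
  simp only [map_add, map_sub, map_mul, map_natCast, map_one, map_zero]
  ring
end
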